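/- arXiv:1712.03572 — 3 statements merged into one kernel-verified Lean document; each statement's English description precedes it below -/
import Mathlib

section
/- In a weighted recursive tree with positive weight sequence (w_i), the probability that node i (with 2 ≤ i < n) is an ancestor of node n equals w_i / (w_1 + w_2 + ... + w_i). -/
open MeasureTheory Finset Filter

/-- Attachment probability in a weighted recursive tree: node `j` attaches to node `i`. -/
noncomputable def wrtStep (w : ℕ → ℝ) (j i : ℕ) : ℝ :=
  if j ≤ 1 then (if i = 0 then 1 else 0)
  else if 1 ≤ i ∧ i < j then w i / (∑ k ∈ Finset.Icc 1 (j - 1), w k) else 0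

/-- The law of a weighted recursive tree on `n` nodes, as a measure on parent functions
`ω : ℕ → ℕ`, where `ω j` is the parent of node `j` (and `ω j = 0` for irrelevant `j`). -/
noncomputable def wrtMeasure (w : ℕ → ℝ) (n : ℕ) : Measure (ℕ → ℕ) :=
  ∑ t : Fin (n + 1) → Fin (n + 1),
    (ENNReal.ofReal (∏ j : Fin (n + 1), wrtStep w j.val (t j).val)) •
      Measure.dirac (fun j => if h : j < n + 1 then (t ⟨j, h⟩).val else 0)

/-- `i` is an ancestor of `m`: some iterate of the parent map sends `m` to `i`. -/
def isAncestor (ω : ℕ → ℕ) (i m : ℕ) : Prop := ∃ l, 0 < l ∧ ω^[l] m = i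

/-- The depth of node `m`: its number of ancestors (nodes on the path from the root to `m`). -/
noncomputable def depth (ω : ℕ → ℕ) (m : ℕ) : ℕ :=
  Set.ncard {i | 1 ≤ i ∧ isAncestor ω i m}

/-- The height of the tree on nodes `1, …, n`: the maximal depth of a node. -/
noncomputable def height (ω : ℕ → ℕ) (n : ℕ) : ℕ :=
  (Finset.Icc 1 n).sup (fun i => depth ω i)

/-- The number of branches: the number of children of the root. -/
def branches (ω : ℕ → ℕ) (n : ℕ) : ℕ :=
  ((Finset.Icc 2 n).filter (fun j => ω j = 1)).card

open scoped Classical in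
/-- The number of leaves: nodes with no children among nodes `1, …, n`. -/
noncomputable def numLeaves (ω : ℕ → ℕ) (n : ℕ) : ℕ :=
  ((Finset.Icc 1 n).filter (fun i => ∀ j ∈ Finset.Icc (i + 1) n, ω j ≠ i)).card


/-!
Write `P m` for the probability that `i` is an ancestor of `m`, and `S j = w 1 + ⋯ + w j`.
Node `m > i` picks its parent `a < m` with probability `w a / S (m - 1)`, independently of the
tree on `1, …, m - 1`; and `i` is an ancestor of `m` iff `a = i`, or `a > i` and `i` is an
ancestor of `a`. Hence `P m = (w i + ∑_{i < a < m} w a * P a) / S (m - 1)`, and since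
`w i + (S (m - 1) - S i) * (w i / S i) = S (m - 1) * (w i / S i)`, strong induction on `m` gives
`P m = w i / S i`.
-/

open Function

section CoordinateSums

variable {ι α R : Type*} [Fintype ι] [DecidableEq ι] [Fintype α] [DecidableEq α]
  [CommSemiring R]

theorem sum_mul_of_update_invariant (m : ι) (a : α) (f : α → R) (H : (ι → α) → R)
    (hH : ∀ t b, H (update t m b) = H t) :
    ∑ t, f (t m) * H t = (∑ b, f b) * ∑ t, if t m = a then H t else 0 := by
  have hσ : Involutive fun x : (ι → α) × α => (update x.1 m x.2, x.1 m) := fun x => by simp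
  calc ∑ t, f (t m) * H t
      = ∑ x : (ι → α) × α, if x.2 = a then f (x.1 m) * H x.1 else 0 := by
        rw [Fintype.sum_prod_type]; simp
    _ = ∑ x : (ι → α) × α, f x.2 * if x.1 m = a then H x.1 else 0 :=
        Fintype.sum_bijective _ hσ.bijective _ _ fun x => by simp [hH]
    _ = _ := by rw [Fintype.sum_prod_type, sum_comm, sum_mul]; simp [mul_sum]

theorem sum_prod_mul_ite_eq (p : ι → α → R) (m : ι) (hp : ∑ b, p m b = 1) (a : α)
    (ψ : (ι → α) → R) (hψ : ∀ t b, ψ (update t m b) = ψ t) :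
    ∑ t, (∏ j, p j (t j)) * (if t m = a then ψ t else 0) =
      p m a * ∑ t, (∏ j, p j (t j)) * ψ t := by
  set H : (ι → α) → R := fun t => (∏ j ∈ univ.erase m, p j (t j)) * ψ t
  have hH : ∀ t b, H (update t m b) = H t := fun t b => by
    simp only [H, hψ]
    congr 1
    exact prod_congr rfl fun j hj => by rw [update_of_ne (ne_of_mem_erase hj)]
  have hsplit : ∀ t, (∏ j, p j (t j)) * ψ t = p m (t m) * H t := fun t => by
    rw [← mul_prod_erase _ _ (mem_univ m), mul_assoc]
  calc ∑ t, (∏ j, p j (t j)) * (if t m = a then ψ t else 0)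
      = ∑ t, (if t m = a then p m a else 0) * H t := by
        refine sum_congr rfl fun t _ => ?_
        split_ifs with h
        · rw [hsplit, h]
        · simp
    _ = p m a * ∑ t, p m (t m) * H t := by
        rw [sum_mul_of_update_invariant m a (fun b => if b = a then p m a else 0) H hH,
          sum_mul_of_update_invariant m a (p m) H hH, hp]
        simp
    _ = _ := by simp only [hsplit]

end CoordinateSums

section Ancestors

variable {ω : ℕ → ℕ} {i m : ℕ}

theorem isAncestor_iff_parent : isAncestor ω i m ↔ ω m = i ∨ isAncestor ω i (ω m) := by
  constructor
  · rintro ⟨_ | l, hl, h⟩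
    · omega
    · rw [iterate_succ_apply] at h
      rcases Nat.eq_zero_or_pos l with rfl | hl
      · exact Or.inl h
      · exact Or.inr ⟨l, hl, h⟩
  · rintro (h | ⟨l, -, h⟩)
    · exact ⟨1, one_pos, h⟩
    · exact ⟨l + 1, l.succ_pos, by rwa [iterate_succ_apply]⟩

theorem iterate_le_self (hω : ∀ j, ω j < j ∨ ω j = 0) (l m : ℕ) : ω^[l] m ≤ m := by
  induction l with
  | zero => rfl
  | succ l ih => rw [iterate_succ_apply']; rcases hω (ω^[l] m) with h | h <;> omega

theorem lt_of_isAncestor (hω : ∀ j, ω j < j ∨ ω j = 0) (hi : 0 < i) (h : isAncestor ω i m) :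
    i < m := by
  obtain ⟨l, hl, h⟩ := h
  obtain ⟨l, rfl⟩ := Nat.exists_eq_add_of_lt hl
  rw [zero_add, iterate_succ_apply] at h
  have := iterate_le_self hω l (ω m)
  rcases hω m with h' | h'
  · omega
  · rw [h', iterate_fixed (by simpa using hω 0)] at h
    omega

theorem isAncestor_update_iff (hω : ∀ j, ω j < j ∨ ω j = 0) {v : ℕ} (hv : v < m)
    (b : ℕ) : isAncestor (update ω m b) i v ↔ isAncestor ω i v := by
  have key : ∀ l, (update ω m b)^[l] v = ω^[l] v := fun l => by
    induction l with
    | zero => rfl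
    | succ l ih =>
      rw [iterate_succ_apply', iterate_succ_apply', ih,
        update_of_ne (by have := iterate_le_self hω l v; omega)]
  simp only [isAncestor, key]

theorem isAncestor_iff_parent_of_pos (hω : ∀ j, ω j < j ∨ ω j = 0) (hi : 0 < i)
    (hm : 0 < m) :
    isAncestor ω i m ↔ ω m = i ∨ (i < ω m ∧ isAncestor (update ω m 0) i (ω m)) := by
  have hωm : ω m < m := by rcases hω m with h | h <;> omega
  rw [isAncestor_iff_parent, isAncestor_update_iff hω hωm]
  exact or_congr_right ⟨fun h => ⟨lt_of_isAncestor hω hi h, h⟩, And.right⟩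

end Ancestors

section WRT

variable {w : ℕ → ℝ} {n : ℕ}

noncomputable def wrtWeight (w : ℕ → ℝ) (n : ℕ) (t : Fin (n + 1) → Fin (n + 1)) : ℝ :=
  ∏ j : Fin (n + 1), wrtStep w j (t j)

def parentMap (n : ℕ) (t : Fin (n + 1) → Fin (n + 1)) (j : ℕ) : ℕ :=
  if h : j < n + 1 then t ⟨j, h⟩ else 0

theorem wrtStep_nonneg (hw : ∀ i, 0 < w i) (j i : ℕ) : 0 ≤ wrtStep w j i := by
  unfold wrtStep
  split_ifs <;> first | exact div_nonneg (hw i).le (sum_nonneg fun k _ => (hw k).le) | norm_num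

theorem lt_or_eq_zero_of_wrtStep_ne_zero {j i : ℕ} (h : wrtStep w j i ≠ 0) :
    i < j ∨ i = 0 := by
  unfold wrtStep at h
  split_ifs at h <;> first | omega | exact absurd rfl h

theorem sum_wrtStep_mul {j : ℕ} (h2j : 2 ≤ j) (hjn : j ≤ n) (f : ℕ → ℝ) :
    ∑ i : Fin (n + 1), wrtStep w j i * f i =
      (∑ i ∈ Icc 1 (j - 1), w i * f i) / ∑ i ∈ Icc 1 (j - 1), w i := by
  rw [Fin.sum_univ_eq_sum_range (fun i => wrtStep w j i * f i), sum_div]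
  unfold wrtStep
  simp only [if_neg (show ¬j ≤ 1 by omega), ite_mul, zero_mul, ← sum_filter]
  refine sum_congr ?_ fun i _ => div_mul_eq_mul_div _ _ _
  ext i; simp only [mem_filter, mem_range, mem_Icc]; omega

theorem sum_wrtStep (hw : ∀ i, 0 < w i) {j : ℕ} (hjn : j ≤ n) :
    ∑ i : Fin (n + 1), wrtStep w j i = 1 := by
  rcases le_or_gt j 1 with hj | hj
  · simp [wrtStep, hj]
  · have hS : 0 < ∑ k ∈ Icc 1 (j - 1), w k :=
      sum_pos (fun k _ => hw k) ⟨1, mem_Icc.mpr ⟨le_rfl, by omega⟩⟩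
    simpa [div_self hS.ne'] using sum_wrtStep_mul (w := w) hj hjn 1

theorem wrtWeight_nonneg (hw : ∀ i, 0 < w i) (t : Fin (n + 1) → Fin (n + 1)) :
    0 ≤ wrtWeight w n t :=
  prod_nonneg fun _ _ => wrtStep_nonneg hw _ _

theorem sum_wrtWeight (hw : ∀ i, 0 < w i) : ∑ t, wrtWeight w n t = 1 := by
  simp only [wrtWeight]
  rw [← Fintype.prod_sum fun j k : Fin (n + 1) => wrtStep w j k]
  exact prod_eq_one fun j _ => sum_wrtStep hw j.is_le

theorem parentMap_lt_or_eq_zero {t : Fin (n + 1) → Fin (n + 1)} (ht : wrtWeight w n t ≠ 0)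
    (j : ℕ) : parentMap n t j < j ∨ parentMap n t j = 0 := by
  unfold parentMap
  split_ifs with hj
  · exact lt_or_eq_zero_of_wrtStep_ne_zero (prod_ne_zero_iff.mp ht ⟨j, hj⟩ (mem_univ _))
  · exact Or.inr rfl

theorem parentMap_update (t : Fin (n + 1) → Fin (n + 1)) (j a : Fin (n + 1)) :
    parentMap n (update t j a) = update (parentMap n t) j a := by
  funext k
  unfold parentMap
  by_cases hk : k = j
  · subst hk; simp [j.is_lt]
  · rw [update_of_ne hk]
    split_ifs with h
    · rw [update_of_ne (Fin.ne_of_val_ne hk)]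
    · rfl


noncomputable def wrtProb (w : ℕ → ℝ) (n : ℕ) (s : Set (ℕ → ℕ)) : ℝ :=
  ∑ t, wrtWeight w n t * s.indicator 1 (parentMap n t)

theorem wrtMeasure_apply (hw : ∀ i, 0 < w i) (s : Set (ℕ → ℕ)) :
    wrtMeasure w n s = ENNReal.ofReal (wrtProb w n s) := by
  have hnonneg : ∀ t, 0 ≤ wrtWeight w n t * s.indicator 1 (parentMap n t) := fun t =>
    mul_nonneg (wrtWeight_nonneg hw t) (Set.indicator_nonneg (fun _ _ => zero_le_one) _)
  simp only [wrtMeasure, Measure.finsetSum_apply, Measure.smul_apply, smul_eq_mul,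
    Measure.dirac_apply]
  rw [wrtProb, ENNReal.ofReal_sum_of_nonneg fun t _ => hnonneg t]
  refine sum_congr rfl fun t _ => ?_
  change ENNReal.ofReal (wrtWeight w n t) * s.indicator 1 (parentMap n t) = _
  rw [ENNReal.ofReal_mul (wrtWeight_nonneg hw t)]
  by_cases h : parentMap n t ∈ s <;> simp [h]

theorem wrtProb_congr {s s' : Set (ℕ → ℕ)}
    (h : ∀ t, wrtWeight w n t ≠ 0 → (parentMap n t ∈ s ↔ parentMap n t ∈ s')) :
    wrtProb w n s = wrtProb w n s' := by
  classical
  refine sum_congr rfl fun t _ => ?_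
  by_cases ht : wrtWeight w n t = 0
  · simp [ht]
  · rw [Set.indicator_apply, Set.indicator_apply, if_congr (h t ht) rfl rfl]

theorem wrtProb_univ (hw : ∀ i, 0 < w i) : wrtProb w n Set.univ = 1 := by
  simp [wrtProb, sum_wrtWeight hw]

theorem wrtProb_isAncestor_eq_sum (hw : ∀ i, 0 < w i) {i m : ℕ} (hi : 0 < i) (him : i < m)
    (hmn : m ≤ n) :
    wrtProb w n {ω | isAncestor ω i m} = ∑ a : Fin (n + 1), wrtStep w m a *
      if (a : ℕ) = i then 1 else if i < a then wrtProb w n {ω | isAncestor ω i a} else 0 := by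
  obtain ⟨m, rfl⟩ : ∃ m' : Fin (n + 1), (m' : ℕ) = m := ⟨⟨m, by omega⟩, rfl⟩
  classical
  have hparent : ∀ t, parentMap n t m = t m := fun t => dif_pos m.is_lt
  -- Cutting `m` off its parent makes `E a` independent of `t m`, so that coordinate factors out.
  let E (a : ℕ) : Set (ℕ → ℕ) := {ω | a = i ∨ (i < a ∧ isAncestor (update ω m 0) i a)}
  calc wrtProb w n {ω | isAncestor ω i m}
      = wrtProb w n {ω | ω m = i ∨ (i < ω m ∧ isAncestor (update ω m 0) i (ω m))} :=
        wrtProb_congr fun t ht =>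
          isAncestor_iff_parent_of_pos (parentMap_lt_or_eq_zero ht) hi (by omega)
    _ = ∑ t, wrtWeight w n t * ∑ a : Fin (n + 1),
          if t m = a then (E a).indicator 1 (parentMap n t) else 0 := by
        refine sum_congr rfl fun t _ => ?_
        rw [sum_ite_eq, if_pos (mem_univ _)]
        simp only [E, Set.indicator_apply, Set.mem_ofPred_eq, hparent]
    _ = ∑ a : Fin (n + 1), wrtStep w m a * wrtProb w n (E a) := by
        simp only [mul_sum]
        rw [sum_comm]
        refine sum_congr rfl fun a _ => sum_prod_mul_ite_eq (fun j k : Fin (n + 1) => wrtStep w j k)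
          m (sum_wrtStep hw hmn) a _ fun t b => ?_
        simp only [E, Set.indicator_apply, Set.mem_ofPred_eq, parentMap_update, update_idem,
          Pi.one_apply]
    _ = _ := by
        refine sum_congr rfl fun a _ => ?_
        rcases eq_or_ne (wrtStep w m a) 0 with ha | ha
        · simp [ha]
        have ham : (a : ℕ) < m := by
          rcases lt_or_eq_zero_of_wrtStep_ne_zero ha with h | h <;> omega
        congr 1
        split_ifs with hai hia
        · rw [← wrtProb_univ hw]
          exact wrtProb_congr fun t _ => by simp [E, hai]
        · exact wrtProb_congr fun t ht => by
            simp [E, hia, hia.ne', isAncestor_update_iff (parentMap_lt_or_eq_zero ht) ham]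
        · simp [wrtProb, E, hai, hia]


theorem sum_wrtStep_mul_ancestor_value (hw : ∀ i, 0 < w i) {i m : ℕ} (hi : 0 < i)
    (him : i < m) (hmn : m ≤ n) :
    ∑ a : Fin (n + 1), wrtStep w m a *
        (if (a : ℕ) = i then 1 else if i < a then w i / ∑ k ∈ Icc 1 i, w k else 0) =
      w i / ∑ k ∈ Icc 1 i, w k := by
  set Q := w i / ∑ k ∈ Icc 1 i, w k with hQ
  have hsplit : ∀ f : ℕ → ℝ,
      ∑ k ∈ Icc 1 (m - 1), f k = ∑ k ∈ Icc 1 i, f k + ∑ k ∈ Ioc i (m - 1), f k := by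
    intro f
    simp only [show ∀ x, Icc 1 x = Ioc 0 x from fun x => Icc_add_one_left_eq_Ioc 0 x]
    exact (sum_Ioc_consecutive f (Nat.zero_le i) (by omega)).symm
  have hlow : ∑ k ∈ Icc 1 i, w k * (if k = i then 1 else if i < k then Q else 0) = w i := by
    rw [sum_eq_single_of_mem i (mem_Icc.mpr ⟨hi, le_rfl⟩) fun k hk hki => by
      simp [hki, (mem_Icc.mp hk).2.not_gt]]
    simp
  have hhigh : ∑ k ∈ Ioc i (m - 1), w k * (if k = i then 1 else if i < k then Q else 0) =
      Q * ∑ k ∈ Ioc i (m - 1), w k := by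
    rw [mul_sum]
    refine sum_congr rfl fun k hk => ?_
    simp [(mem_Ioc.mp hk).1, (mem_Ioc.mp hk).1.ne', mul_comm]
  have hSi : 0 < ∑ k ∈ Icc 1 i, w k :=
    sum_pos (fun k _ => hw k) ⟨i, mem_Icc.mpr ⟨hi, le_rfl⟩⟩
  have hT : 0 ≤ ∑ k ∈ Ioc i (m - 1), w k := sum_nonneg fun k _ => (hw k).le
  rw [sum_wrtStep_mul (by omega) hmn fun k => if k = i then 1 else if i < k then Q else 0,
    hsplit, hsplit, hlow, hhigh, div_eq_iff (by positivity), mul_add, hQ,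
    div_mul_cancel₀ _ hSi.ne', add_comm]

theorem wrtProb_isAncestor (hw : ∀ i, 0 < w i) {i m : ℕ} (hi : 0 < i) (him : i < m)
    (hmn : m ≤ n) :
    wrtProb w n {ω | isAncestor ω i m} = w i / ∑ k ∈ Icc 1 i, w k := by
  induction m using Nat.strong_induction_on with
  | _ m ih =>
  rw [wrtProb_isAncestor_eq_sum hw hi him hmn,
    ← sum_wrtStep_mul_ancestor_value (n := n) hw hi him hmn]
  refine sum_congr rfl fun a _ => ?_
  rcases eq_or_ne (wrtStep w m a) 0 with ha | ha
  · simp [ha]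
  have ham : (a : ℕ) < m := by
    rcases lt_or_eq_zero_of_wrtStep_ne_zero ha with h | h <;> omega
  split_ifs with hai hia <;> first | rfl | rw [ih a ham hia (by omega)]

end WRT

/-- In a weighted recursive tree with positive weights, the probability that node `i`
(with `2 ≤ i < n`) is an ancestor of node `n` is `w i / (w 1 + ⋯ + w i)`. -/
theorem ancestor_prob (w : ℕ → ℝ) (hw : ∀ i, 0 < w i) (n i : ℕ) (h2 : 2 ≤ i) (hin : i < n) :
    wrtMeasure w n {ω | isAncestor ω i n} =
      ENNReal.ofReal (w i / ∑ k ∈ Finset.Icc 1 i, w k) := by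
  rw [wrtMeasure_apply hw, wrtProb_isAncestor hw (by omega) hin le_rfl]
end

section
/- In a weighted recursive tree on n nodes, the indicator random variables A_{i,n} = 1(node i is an ancestor of node n), for i = 2, ..., n-1, are mutually independent Bernoulli random variables with success probabilities w_i / (w_1 + ... + w_i). -/
open MeasureTheory Finset Filter

/-!
Read a tree as its parent map `ω`; the parents `ω j` are independent, with
`P(ω j = i) = w i / W (j - 1)` for `1 ≤ i < j`, where `W i = w 1 + ⋯ + w i`.
On parent maps, the ancestors of `n` in `{2, …, n - 1}` form the set `S` iff every node `m`
of `{n} ∪ S` is attached to its predecessor `pathParent S m` in `{1} ∪ S`. As `pathParent S`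
maps `{n} ∪ S` bijectively onto `{1} ∪ S`, this cylinder event has probability
`(∏_{b ∈ {1} ∪ S} w b) / ∏_{m ∈ {n} ∪ S} W (m - 1)`. Since `1 - w m / W m = W (m - 1) / W m`
telescopes over `2 ≤ m ≤ n - 1`, this is `∏_{m ∈ S} p m * ∏_{m ∉ S} (1 - p m)` with
`p m = w m / W m`: the indicator vector has the product law of Bernoulli(`p m`) variables.
-/

open scoped unitInterval
open ProbabilityTheory

namespace WeightedRecursiveTree

variable {w : ℕ → ℝ} {n : ℕ}

noncomputable def cumWeight (w : ℕ → ℝ) (i : ℕ) : ℝ := ∑ k ∈ Icc 1 i, w k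

lemma cumWeight_pos (hw : ∀ i, 0 < w i) {i : ℕ} (hi : 1 ≤ i) : 0 < cumWeight w i :=
  sum_pos (fun k _ => hw k) ⟨1, by simp [hi]⟩

lemma cumWeight_one : cumWeight w 1 = w 1 := by simp [cumWeight]

lemma cumWeight_succ (i : ℕ) : cumWeight w (i + 1) = cumWeight w i + w (i + 1) :=
  sum_Icc_succ_top (by omega) w

lemma le_cumWeight (hw : ∀ i, 0 ≤ w i) {i : ℕ} (hi : 1 ≤ i) : w i ≤ cumWeight w i :=
  single_le_sum (fun k _ => hw k) (by simp [hi])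

lemma prod_cumWeight_div (hw : ∀ i, 0 < w i) {N : ℕ} (hN : 1 ≤ N) :
    ∏ m ∈ Icc 2 N, cumWeight w (m - 1) / cumWeight w m = cumWeight w 1 / cumWeight w N := by
  induction N, hN using Nat.le_induction with
  | base => simp [(cumWeight_pos hw le_rfl).ne']
  | succ N hN ih =>
    rw [prod_Icc_succ_top (by omega), ih, Nat.add_sub_cancel]
    field_simp [(cumWeight_pos hw hN).ne', (cumWeight_pos hw (Nat.le_succ_of_le hN)).ne']

lemma one_sub_div_cumWeight (hw : ∀ i, 0 < w i) {i : ℕ} (hi : 2 ≤ i) :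
    1 - w i / cumWeight w i = cumWeight w (i - 1) / cumWeight w i := by
  obtain ⟨k, rfl⟩ : ∃ k, i = k + 1 := ⟨i - 1, by omega⟩
  have hpos := cumWeight_pos hw (show 1 ≤ k + 1 by omega)
  rw [Nat.add_sub_cancel, eq_div_iff hpos.ne', sub_mul, div_mul_cancel₀ _ hpos.ne', one_mul,
    cumWeight_succ, add_sub_cancel_right]

section Step
variable {i j : ℕ}

lemma wrtStep_of_lt (hj : 2 ≤ j) (hi : 1 ≤ i) (hij : i < j) :
    wrtStep w j i = w i / cumWeight w (j - 1) := by
  rw [wrtStep, if_neg (by omega), if_pos ⟨hi, hij⟩]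
  rfl

lemma wrtStep_nonneg (hw : ∀ i, 0 ≤ w i) (j i : ℕ) : 0 ≤ wrtStep w j i := by
  unfold wrtStep
  split_ifs <;> first | exact div_nonneg (hw i) (sum_nonneg fun k _ => hw k) | norm_num

lemma wrtStep_ne_zero (h : wrtStep w j i ≠ 0) :
    j ≤ 1 ∧ i = 0 ∨ 2 ≤ j ∧ 1 ≤ i ∧ i < j := by
  unfold wrtStep at h
  split_ifs at h <;> first | omega | simp at h

lemma sum_wrtStep (hw : ∀ i, 0 < w i) (hj : j ≤ n) :
    ∑ i ∈ range (n + 1), wrtStep w j i = 1 := by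
  by_cases hj₁ : j ≤ 1
  · simp [wrtStep, hj₁]
  · have hsupp : (range (n + 1)).filter (fun i => 1 ≤ i ∧ i < j) = Icc 1 (j - 1) := by
      ext i
      simp only [mem_filter, mem_range, mem_Icc]
      omega
    simp only [wrtStep, if_neg hj₁]
    rw [← sum_filter, hsupp, ← sum_div]
    exact div_self (cumWeight_pos hw (by omega)).ne'

end Step

def parentOf (n : ℕ) (t : Fin (n + 1) → Fin (n + 1)) : ℕ → ℕ :=
  fun j => if h : j < n + 1 then (t ⟨j, h⟩).val else 0

lemma wrtMeasure_apply (s : Set (ℕ → ℕ)) :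
    wrtMeasure w n s = ∑ t, ENNReal.ofReal (∏ j : Fin (n + 1), wrtStep w j (t j)) *
      s.indicator 1 (parentOf n t) := by
  simp only [wrtMeasure, Measure.coe_finsetSum, Finset.sum_apply, Measure.smul_apply,
    Measure.dirac_apply, smul_eq_mul]
  rfl

lemma wrtMeasure_cylinder (hw : ∀ i, 0 < w i) (C : Finset ℕ) (c : ℕ → ℕ)
    (hC : ∀ j ∈ C, j ≤ n ∧ c j ≤ n) :
    wrtMeasure w n {ω | ∀ j ∈ C, ω j = c j} =
      ∏ j ∈ C, ENNReal.ofReal (wrtStep w j (c j)) := by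
  classical
  set T : Fin (n + 1) → Finset (Fin (n + 1)) := fun j => {i | j.val ∈ C → i.val = c j}
  have hmem (t) : parentOf n t ∈ {ω | ∀ j ∈ C, ω j = c j} ↔ t ∈ Fintype.piFinset T := by
    simp only [Set.mem_ofPred_eq, Fintype.mem_piFinset, T, mem_filter, mem_univ, true_and]
    refine ⟨fun h j hj => by simpa [parentOf, j.is_le] using h j hj, fun h j hj => ?_⟩
    simpa [parentOf, show j < n + 1 by grind] using h ⟨j, by grind⟩ hj
  have hrow (j : Fin (n + 1)) : ∑ i ∈ T j, ENNReal.ofReal (wrtStep w j i) =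
      if j.val ∈ C then ENNReal.ofReal (wrtStep w j (c j)) else 1 := by
    split_ifs with hj
    · have : T j = {⟨c j, by grind⟩} := by ext i; simp [T, hj, Fin.ext_iff]
      rw [this, sum_singleton]
    · have : T j = univ := by ext; simp [T, hj]
      rw [this, ← ENNReal.ofReal_sum_of_nonneg fun i _ => wrtStep_nonneg (fun k => (hw k).le) _ _,
        Fin.sum_univ_eq_sum_range (fun i => wrtStep w j i), sum_wrtStep hw (by omega),
        ENNReal.ofReal_one]
  calc wrtMeasure w n {ω | ∀ j ∈ C, ω j = c j}
      = ∑ t ∈ Fintype.piFinset T, ∏ j : Fin (n + 1), ENNReal.ofReal (wrtStep w j (t j)) := by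
        simp_rw [wrtMeasure_apply, Set.indicator_apply, hmem, Pi.one_apply, mul_ite, mul_one,
          mul_zero]
        rw [sum_ite_mem, univ_inter]
        exact sum_congr rfl fun t _ => ENNReal.ofReal_prod_of_nonneg fun j _ =>
          wrtStep_nonneg (fun k => (hw k).le) _ _
    _ = ∏ j, ∑ i ∈ T j, ENNReal.ofReal (wrtStep w j i) := by rw [prod_univ_sum]
    _ = ∏ j ∈ C, ENNReal.ofReal (wrtStep w j (c j)) := by
        rw [prod_congr rfl fun j _ => hrow j, Fin.prod_univ_eq_prod_range
            (fun j => if j ∈ C then ENNReal.ofReal (wrtStep w j (c j)) else 1),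
          prod_ite_mem, inter_eq_right.mpr fun j hj => mem_range.mpr (by grind)]

lemma isProbabilityMeasure_wrtMeasure (hw : ∀ i, 0 < w i) :
    IsProbabilityMeasure (wrtMeasure w n) :=
  ⟨by simpa using wrtMeasure_cylinder hw (n := n) ∅ id (by simp)⟩

structure IsParentMap (n : ℕ) (ω : ℕ → ℕ) : Prop where
  apply_zero : ω 0 = 0
  apply_one : ω 1 = 0
  apply_mem : ∀ m, 2 ≤ m → m ≤ n → 1 ≤ ω m ∧ ω m < m

lemma isParentMap_parentOf {t : Fin (n + 1) → Fin (n + 1)}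
    (ht : ∀ j : Fin (n + 1), wrtStep w j (t j) ≠ 0) : IsParentMap n (parentOf n t) where
  apply_zero := by simpa [parentOf] using wrtStep_ne_zero (ht 0)
  apply_one := by
    unfold parentOf
    split_ifs with h
    · simpa using wrtStep_ne_zero (ht ⟨1, h⟩)
    · rfl
  apply_mem m hm hmn := by
    have := wrtStep_ne_zero (j := m) (ht ⟨m, by omega⟩)
    simp only [parentOf, dif_pos (show m < n + 1 by omega)]
    omega

lemma ae_isParentMap : ∀ᵐ ω ∂wrtMeasure w n, IsParentMap n ω := by
  rw [ae_iff, wrtMeasure_apply]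
  refine sum_eq_zero fun t _ => ?_
  by_cases ht : ∀ j : Fin (n + 1), wrtStep w j (t j) ≠ 0
  · simp [isParentMap_parentOf ht]
  · obtain ⟨j, hj⟩ := not_forall_not.mp ht
    rw [prod_eq_zero (mem_univ j) hj]
    simp

lemma isAncestor_iff {ω : ℕ → ℕ} {i m : ℕ} :
    isAncestor ω i m ↔ ∃ l, ω^[l + 1] m = i :=
  ⟨fun ⟨l, hl, h⟩ => ⟨l - 1, by rwa [Nat.sub_add_cancel hl]⟩,
    fun ⟨l, h⟩ => ⟨l + 1, l.succ_pos, h⟩⟩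

namespace IsParentMap
variable {ω : ℕ → ℕ} {m : ℕ}

lemma apply_le (hω : IsParentMap n ω) (hm : m ≤ n) : ω m ≤ m :=
  match m with
  | 0 => hω.apply_zero.le
  | 1 => hω.apply_one ▸ zero_le_one
  | m + 2 => (hω.apply_mem _ (by omega) hm).2.le

lemma iterate_le (hω : IsParentMap n ω) (hm : m ≤ n) (l : ℕ) : ω^[l] m ≤ m := by
  induction l with
  | zero => rfl
  | succ l ih =>
    rw [Function.iterate_succ_apply']
    exact (hω.apply_le (ih.trans hm)).trans ih

lemma antitone_iterate (hω : IsParentMap n ω) (hm : m ≤ n) : Antitone fun l => ω^[l] m :=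
  antitone_nat_of_succ_le fun l => by
    simpa only [Function.iterate_succ_apply'] using hω.apply_le ((hω.iterate_le hm l).trans hm)

lemma iterate_le_apply_iterate (hω : IsParentMap n ω) (hm : m ≤ n) {a b : ℕ}
    (h : ω^[b] m < ω^[a] m) : ω^[b] m ≤ ω (ω^[a] m) := by
  have hab : a + 1 ≤ b := by
    by_contra! hba
    exact (hω.antitone_iterate hm (show b ≤ a by omega)).not_gt h
  simpa only [Function.iterate_succ_apply'] using hω.antitone_iterate hm hab

end IsParentMap

noncomputable def pathParent (S : Finset ℕ) (b : ℕ) : ℕ :=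
  Nat.findGreatest (· ∈ insert 1 S) (b - 1)

section PathParent
variable {b x : ℕ} {S : Finset ℕ}

lemma pathParent_mem (hb : 2 ≤ b) : pathParent S b ∈ insert 1 S :=
  Nat.findGreatest_spec (m := 1) (by omega) (mem_insert_self 1 S)

lemma pathParent_lt (hb : 1 ≤ b) : pathParent S b < b :=
  (Nat.findGreatest_le _).trans_lt (by omega)

lemma le_pathParent (hx : x ∈ insert 1 S) (hxb : x < b) : x ≤ pathParent S b :=
  Nat.le_findGreatest (by omega) hx

lemma mem_insert_bounds (hn : 2 ≤ n) (hS : S ⊆ Icc 2 (n - 1)) (hb : b ∈ insert n S) :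
    2 ≤ b ∧ b ≤ n := by
  rcases mem_insert.mp hb with rfl | hb
  · exact ⟨hn, le_rfl⟩
  · have := mem_Icc.mp (hS hb)
    omega

lemma pathParent_strictMonoOn (hn : 2 ≤ n) (hS : S ⊆ Icc 2 (n - 1)) :
    StrictMonoOn (pathParent S) (insert n S : Finset ℕ) := by
  intro a ha a' ha' haa'
  have haS : a ∈ S := (mem_insert.mp ha).resolve_left
    (by have := mem_insert_bounds hn hS ha'; omega)
  exact (pathParent_lt (by have := mem_insert_bounds hn hS ha; omega)).trans_le
    (le_pathParent (mem_insert_of_mem haS) haa')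

lemma image_pathParent (hn : 2 ≤ n) (hS : S ⊆ Icc 2 (n - 1)) :
    (insert n S).image (pathParent S) = insert 1 S := by
  refine eq_of_subset_of_card_le
    (image_subset_iff.mpr fun b hb => pathParent_mem (mem_insert_bounds hn hS hb).1) ?_
  have h1 : 1 ∉ S := fun h => by have := mem_Icc.mp (hS h); omega
  have hnS : n ∉ S := fun h => by have := mem_Icc.mp (hS h); omega
  rw [card_image_of_injOn (pathParent_strictMonoOn hn hS).injOn,
    card_insert_of_notMem h1, card_insert_of_notMem hnS]

lemma prod_wrtStep_pathParent (hw : ∀ i, 0 < w i) (hn : 2 ≤ n) (hS : S ⊆ Icc 2 (n - 1)) :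
    ∏ m ∈ insert n S, wrtStep w m (pathParent S m) =
      ∏ m ∈ Icc 2 (n - 1),
        if m ∈ S then w m / cumWeight w m else 1 - w m / cumWeight w m := by
  have hW {m : ℕ} (hm : 1 ≤ m) : cumWeight w m ≠ 0 := (cumWeight_pos hw hm).ne'
  have h1 : 1 ∉ S := fun h => by have := mem_Icc.mp (hS h); omega
  have hnS : n ∉ S := fun h => by have := mem_Icc.mp (hS h); omega
  have hS1 : ∀ m ∈ S, 1 ≤ m - 1 := fun m hm => by have := mem_Icc.mp (hS hm); omega
  calc ∏ m ∈ insert n S, wrtStep w m (pathParent S m)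
      = (∏ b ∈ insert 1 S, w b) / ∏ m ∈ insert n S, cumWeight w (m - 1) := by
        rw [← image_pathParent hn hS, prod_image (pathParent_strictMonoOn hn hS).injOn,
          ← prod_div_distrib]
        refine prod_congr rfl fun m hm => ?_
        have hm2 := (mem_insert_bounds hn hS hm).1
        exact wrtStep_of_lt hm2 (le_pathParent (mem_insert_self 1 S) (by omega))
          (pathParent_lt (by omega))
    _ = (∏ m ∈ S, w m / cumWeight w (m - 1)) * (cumWeight w 1 / cumWeight w (n - 1)) := by
        rw [prod_insert h1, prod_insert hnS, prod_div_distrib, cumWeight_one]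
        have := prod_ne_zero_iff.mpr fun m hm => hW (hS1 m hm)
        field_simp [hW (show 1 ≤ n - 1 by omega)]
    _ = (∏ m ∈ Icc 2 (n - 1), if m ∈ S then w m / cumWeight w (m - 1) else 1) *
          ∏ m ∈ Icc 2 (n - 1), cumWeight w (m - 1) / cumWeight w m := by
        rw [prod_ite_mem, inter_eq_right.mpr hS, prod_cumWeight_div hw (by omega)]
    _ = _ := by
        rw [← prod_mul_distrib]
        refine prod_congr rfl fun m hm => ?_
        have := mem_Icc.mp hm
        split_ifs
        · field_simp [hW (show 1 ≤ m - 1 by omega), hW (show 1 ≤ m by omega)]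
        · rw [one_mul, one_sub_div_cumWeight hw this.1]

end PathParent

def AncestorsEq (n : ℕ) (S : Finset ℕ) (ω : ℕ → ℕ) : Prop :=
  ∀ i ∈ Icc 2 (n - 1), isAncestor ω i n ↔ i ∈ S

def FollowsPath (n : ℕ) (S : Finset ℕ) (ω : ℕ → ℕ) : Prop :=
  ∀ m ∈ insert n S, ω m = pathParent S m

section Pattern
variable {S : Finset ℕ} {ω : ℕ → ℕ}

lemma AncestorsEq.followsPath (hn : 2 ≤ n) (hS : S ⊆ Icc 2 (n - 1)) (hω : IsParentMap n ω)
    (h : AncestorsEq n S ω) : FollowsPath n S ω := by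
  intro m hm
  obtain ⟨hm2, hmn⟩ := mem_insert_bounds hn hS hm
  obtain ⟨hpar₁, hpar₂⟩ := hω.apply_mem m hm2 hmn
  obtain ⟨a, rfl⟩ : ∃ a, ω^[a] n = m := by
    rcases mem_insert.mp hm with rfl | hmS
    · exact ⟨0, rfl⟩
    · obtain ⟨l, hl⟩ := isAncestor_iff.mp ((h _ (hS hmS)).mpr hmS)
      exact ⟨l + 1, hl⟩
  have hmem : ω (ω^[a] n) ∈ insert 1 S := by
    rcases hpar₁.eq_or_lt with h1 | h1
    · exact h1 ▸ mem_insert_self 1 S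
    · refine mem_insert_of_mem ((h _ (mem_Icc.mpr ⟨h1, by omega⟩)).mp ?_)
      exact isAncestor_iff.mpr ⟨a, Function.iterate_succ_apply' ω a n⟩
  refine le_antisymm (le_pathParent hmem hpar₂) ?_
  rcases mem_insert.mp (pathParent_mem (S := S) hm2) with h1 | hpS
  · exact h1 ▸ hpar₁
  · obtain ⟨l, hl⟩ := isAncestor_iff.mp ((h _ (hS hpS)).mpr hpS)
    rw [← hl] at hpS ⊢
    exact hω.iterate_le_apply_iterate le_rfl (hl ▸ pathParent_lt (by omega))

lemma FollowsPath.ancestorsEq (hn : 2 ≤ n) (hS : S ⊆ Icc 2 (n - 1)) (hω : IsParentMap n ω)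
    (h : FollowsPath n S ω) : AncestorsEq n S ω := by
  have horbit (l : ℕ) : ω^[l + 1] n ∈ insert 0 (insert 1 S) := by
    induction l with
    | zero =>
      rw [Function.iterate_one, h n (mem_insert_self n S)]
      exact mem_insert_of_mem (pathParent_mem hn)
    | succ l ih =>
      rw [Function.iterate_succ_apply']
      rcases mem_insert.mp ih with h0 | ih
      · simp [h0, hω.apply_zero]
      rcases mem_insert.mp ih with h1 | hS'
      · simp [h1, hω.apply_one]
      rw [h _ (mem_insert_of_mem hS')]
      exact mem_insert_of_mem (pathParent_mem (mem_Icc.mp (hS hS')).1)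
  -- every `b ∈ {1} ∪ S` is the path parent of some `m ∈ {n} ∪ S`, reached earlier from `n`
  have hreach (b : ℕ) (hb : b ∈ insert 1 S) : ∃ l, ω^[l + 1] n = b := by
    induction hk : n - b using Nat.strong_induction_on generalizing b with
    | _ k ih =>
      obtain ⟨m, hm, rfl⟩ := mem_image.mp ((image_pathParent hn hS).symm ▸ hb)
      rcases mem_insert.mp hm with rfl | hmS
      · exact ⟨0, by rw [Function.iterate_one, h _ hm]⟩
      · have hm2 := (mem_Icc.mp (hS hmS)).1
        have := pathParent_lt (S := S) (b := m) (by omega)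
        obtain ⟨l, hl⟩ := ih (n - m) (by have := mem_Icc.mp (hS hmS); omega) m
          (mem_insert_of_mem hmS) rfl
        exact ⟨l + 1, by rw [Function.iterate_succ_apply', hl, h m hm]⟩
  intro i hi
  have hi' := mem_Icc.mp hi
  rw [isAncestor_iff]
  refine ⟨fun ⟨l, hl⟩ => ?_, fun hiS => hreach i (mem_insert_of_mem hiS)⟩
  have := horbit l
  rw [hl] at this
  simpa [show i ≠ 0 by omega, show i ≠ 1 by omega] using this

lemma ancestorsEq_ae_eq_followsPath (hn : 2 ≤ n) (hS : S ⊆ Icc 2 (n - 1)) :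
    {ω | AncestorsEq n S ω} =ᵐ[wrtMeasure w n] {ω | FollowsPath n S ω} :=
  ae_isParentMap.mono fun _ hω =>
    propext ⟨(·.followsPath hn hS hω), (·.ancestorsEq hn hS hω)⟩

end Pattern

/-- Clamped into `[0, 1]` so as to be a point of `I`; for nonnegative weights the clamp is
inactive (`coe_ancestorProb`). -/
noncomputable def ancestorProb (w : ℕ → ℝ) (i : ℕ) : I :=
  Set.projIcc 0 1 zero_le_one (w i / cumWeight w i)

lemma coe_ancestorProb (hw : ∀ i, 0 ≤ w i) {i : ℕ} (hi : 1 ≤ i) :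
    (ancestorProb w i : ℝ) = w i / cumWeight w i := by
  rw [ancestorProb, Set.projIcc_of_mem]
  exact ⟨div_nonneg (hw i) (sum_nonneg fun k _ => hw k),
    div_le_one_of_le₀ (le_cumWeight hw hi) (sum_nonneg fun k _ => hw k)⟩

lemma bernoulliMeasure_singleton_one (p : I) : Ber((1 : ℕ), 0, p) {1} = ENNReal.ofReal p := by
  rw [bernoulliMeasure_apply_of_mem_of_notMem p (measurableSet_singleton 1) rfl (by simp)]
  exact ENNReal.ofReal_coe_nnreal.symm

lemma bernoulliMeasure_singleton_zero (p : I) :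
    Ber((1 : ℕ), 0, p) {0} = ENNReal.ofReal (1 - p) := by
  rw [bernoulliMeasure_apply_of_notMem_of_mem p (measurableSet_singleton 0) (by simp) rfl,
    ← unitInterval.coe_symm_eq]
  exact ENNReal.ofReal_coe_nnreal.symm

theorem wrtMeasure_ancestorsEq (hw : ∀ i, 0 < w i) {S : Finset ℕ} (hn : 2 ≤ n)
    (hS : S ⊆ Icc 2 (n - 1)) :
    wrtMeasure w n {ω | AncestorsEq n S ω} =
      ∏ m ∈ Icc 2 (n - 1), Ber((1 : ℕ), 0, ancestorProb w m) {if m ∈ S then 1 else 0} := by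
  have hcyl : ∀ m ∈ insert n S, m ≤ n ∧ pathParent S m ≤ n := fun m hm => by
    have := mem_insert_bounds hn hS hm
    have := pathParent_lt (S := S) (b := m) (by omega)
    omega
  have hp (m) (hm : m ∈ Icc 2 (n - 1)) : w m / cumWeight w m = ancestorProb w m :=
    (coe_ancestorProb (fun k => (hw k).le) (by have := mem_Icc.mp hm; omega)).symm
  calc wrtMeasure w n {ω | AncestorsEq n S ω}
      = wrtMeasure w n {ω | ∀ m ∈ insert n S, ω m = pathParent S m} :=
        measure_congr (ancestorsEq_ae_eq_followsPath hn hS)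
    _ = ENNReal.ofReal (∏ m ∈ insert n S, wrtStep w m (pathParent S m)) := by
        rw [wrtMeasure_cylinder hw _ _ hcyl,
          ENNReal.ofReal_prod_of_nonneg fun _ _ => wrtStep_nonneg (fun k => (hw k).le) _ _]
    _ = ∏ m ∈ Icc 2 (n - 1),
          ENNReal.ofReal (if m ∈ S then (ancestorProb w m : ℝ) else 1 - ancestorProb w m) := by
        rw [prod_wrtStep_pathParent hw hn hS, prod_congr rfl fun m hm => by rw [hp m hm],
          ENNReal.ofReal_prod_of_nonneg fun m _ => by
            split_ifs
            exacts [unitInterval.nonneg _, unitInterval.one_minus_nonneg _]]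
    _ = _ := by
        refine prod_congr rfl fun m _ => ?_
        split_ifs
        exacts [(bernoulliMeasure_singleton_one _).symm, (bernoulliMeasure_singleton_zero _).symm]

lemma measurable_iterate_apply (m l : ℕ) : Measurable fun ω : ℕ → ℕ => ω^[l] m := by
  induction l with
  | zero => exact measurable_const
  | succ l ih =>
    simp only [Function.iterate_succ_apply']
    exact (measurable_from_prod_countable_left (f := fun p : (ℕ → ℕ) × ℕ => p.1 p.2)
      fun k => measurable_pi_apply k).comp (measurable_id.prodMk ih)

lemma measurableSet_isAncestor (i m : ℕ) :
    MeasurableSet {ω : ℕ → ℕ | isAncestor ω i m} := by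
  simp only [isAncestor_iff, Set.ofPred_exists]
  exact .iUnion fun l => measurableSet_eq_fun (measurable_iterate_apply m (l + 1)) measurable_const

open scoped Classical in
noncomputable def ancestorIndicator (n : ℕ) (ω : ℕ → ℕ) (i : ℕ) : ℕ :=
  if isAncestor ω i n then 1 else 0

lemma measurable_ancestorIndicator (n i : ℕ) : Measurable fun ω => ancestorIndicator n ω i :=
  Measurable.ite (measurableSet_isAncestor i n) measurable_const measurable_const

lemma measurable_ancestorIndicators (n : ℕ) (s : Finset ℕ) :
    Measurable fun ω (i : s) => ancestorIndicator n ω i :=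
  measurable_pi_lambda _ fun i => measurable_ancestorIndicator n i

theorem map_ancestorIndicators_eq_pi (hw : ∀ i, 0 < w i) (hn : 2 ≤ n) :
    (wrtMeasure w n).map (fun ω (i : Icc 2 (n - 1)) => ancestorIndicator n ω i) =
      Measure.pi fun i : Icc 2 (n - 1) => Ber((1 : ℕ), 0, ancestorProb w i) := by
  refine Measure.ext_of_singleton fun x => ?_
  rw [Measure.map_apply (measurable_ancestorIndicators n _) (measurableSet_singleton x),
    Measure.pi_singleton]
  by_cases hx : ∀ i, x i ≤ 1
  · set S := (univ.filter fun i => x i = 1).map (Function.Embedding.subtype _)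
    have hS : S ⊆ Icc 2 (n - 1) := fun m hm => by
      obtain ⟨i, -, rfl⟩ := mem_map.mp hm
      exact i.2
    have hmemS (i : Icc 2 (n - 1)) : i.val ∈ S ↔ x i = 1 := by simp [S]
    have hpre : (fun ω (i : Icc 2 (n - 1)) => ancestorIndicator n ω i) ⁻¹' {x} =
        {ω | AncestorsEq n S ω} := by
      ext ω
      simp only [Set.mem_preimage, Set.mem_singleton_iff, funext_iff, Set.mem_ofPred_eq,
        AncestorsEq, Subtype.forall, ancestorIndicator]
      refine forall₂_congr fun i hi => ?_
      have := hx ⟨i, hi⟩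
      rw [hmemS ⟨i, hi⟩]
      split_ifs <;> grind
    rw [hpre, wrtMeasure_ancestorsEq hw hn hS, ← prod_coe_sort]
    refine prod_congr rfl fun i _ => ?_
    have := hx i
    have := hmemS i
    split_ifs <;> grind
  · obtain ⟨i, hi⟩ := not_forall.mp hx
    rw [prod_eq_zero (mem_univ i) (bernoulliMeasure_apply_of_notMem_of_notMem _
      (measurableSet_singleton _) (by simp; omega) (by simp; omega))]
    refine measure_mono_null (fun ω hω => ?_) measure_empty
    have := congrFun hω i
    simp only [ancestorIndicator] at this
    split_ifs at this <;> omega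

theorem map_ancestorIndicator_eq (hw : ∀ i, 0 < w i) (hn : 2 ≤ n) (i : Icc 2 (n - 1)) :
    (wrtMeasure w n).map (fun ω => ancestorIndicator n ω i) =
      Ber((1 : ℕ), 0, ancestorProb w i) := by
  have := isProbabilityMeasure_wrtMeasure (n := n) hw
  rw [← (measurePreserving_eval (fun i : Icc 2 (n - 1) => Ber((1 : ℕ), 0, ancestorProb w i))
      i).map_eq, ← map_ancestorIndicators_eq_pi hw hn,
    Measure.map_map (measurable_pi_apply i) (measurable_ancestorIndicators n _)]
  rfl

lemma wrtMeasure_ancestorIndicator_eq (hw : ∀ i, 0 < w i) {i : ℕ} (hn : 2 ≤ n)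
    (hi : i ∈ Icc 2 (n - 1)) (k : ℕ) :
    wrtMeasure w n {ω | ancestorIndicator n ω i = k} =
      Ber((1 : ℕ), 0, ancestorProb w i) {k} := by
  rw [← map_ancestorIndicator_eq hw hn ⟨i, hi⟩,
    Measure.map_apply (measurable_ancestorIndicator n i) (measurableSet_singleton k)]
  rfl

end WeightedRecursiveTree

open WeightedRecursiveTree

open scoped Classical in
/-- The ancestor indicators `A i = 1(i is an ancestor of n)`, `i = 2, …, n-1`, are mutually
independent Bernoulli random variables with success probabilities `w i / (w 1 + ⋯ + w i)`. -/
theorem ancestor_indicators_iIndep_bernoulli (w : ℕ → ℝ) (hw : ∀ i, 0 < w i)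
    (n : ℕ) (hn : 3 ≤ n) :
    (∀ i, 2 ≤ i → i ≤ n - 1 →
      wrtMeasure w n {ω | (if isAncestor ω i n then (1 : ℕ) else 0) = 1} =
        ENNReal.ofReal (w i / ∑ k ∈ Finset.Icc 1 i, w k) ∧
      wrtMeasure w n {ω | (if isAncestor ω i n then (1 : ℕ) else 0) = 0} =
        ENNReal.ofReal (1 - w i / ∑ k ∈ Finset.Icc 1 i, w k)) ∧
    ProbabilityTheory.iIndepFun
      (fun i : (Finset.Icc 2 (n - 1)) => fun ω : ℕ → ℕ =>
        if isAncestor ω i.val n then (1 : ℕ) else 0)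
      (wrtMeasure w n) := by
  have hn₂ : 2 ≤ n := by omega
  have := isProbabilityMeasure_wrtMeasure (n := n) hw
  refine ⟨fun i hi₂ hin => ?_, ?_⟩
  · have hi : i ∈ Icc 2 (n - 1) := mem_Icc.mpr ⟨hi₂, hin⟩
    have hp := coe_ancestorProb (fun k => (hw k).le) (show 1 ≤ i by omega)
    refine ⟨(wrtMeasure_ancestorIndicator_eq hw hn₂ hi 1).trans ?_,
      (wrtMeasure_ancestorIndicator_eq hw hn₂ hi 0).trans ?_⟩
    · rw [bernoulliMeasure_singleton_one, hp]
      rfl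
    · rw [bernoulliMeasure_singleton_zero, hp]
      rfl
  · refine (iIndepFun_iff_map_fun_eq_pi_map
      (f := fun (i : Icc 2 (n - 1)) ω => ancestorIndicator n ω i)
      fun i => (measurable_ancestorIndicator n i).aemeasurable).mpr ?_
    simpa only [map_ancestorIndicator_eq hw hn₂] using map_ancestorIndicators_eq_pi hw hn₂
end

section
/- Under the root-splitting coupling of a weighted recursive tree T_n^w (with w_i = 1 for i > k) with a Hoppe tree T_{n-k+1}^θ with θ = w_1+...+w_k, the heights satisfy H_{n-k+1}^θ ≤ H_n^w ≤ H_{n-k+1}^θ + k - 1 almost surely. -/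
open MeasureTheory Finset Filter

namespace HC

def ψ (k x : ℕ) : ℕ := if x ≤ k then 1 else x - k + 1


def Nice (N : ℕ) (ω : ℕ → ℕ) : Prop :=
  ω 0 = 0 ∧ ω 1 = 0 ∧ ∀ j, 2 ≤ j → j ≤ N → 1 ≤ ω j ∧ ω j < j

variable {N : ℕ} {ω : ℕ → ℕ}

lemma iter_zero (h0 : ω 0 = 0) : ∀ l, ω^[l] 0 = 0 := by
  intro l; induction l with
  | zero => rfl
  | succ l ih => rw [Function.iterate_succ_apply, h0]; exact ih

lemma Nice.iter_lt (h : Nice N ω) : ∀ m, m ≤ N → 1 ≤ m → ∀ l, 1 ≤ l → ω^[l] m < m := by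
  intro m
  induction m using Nat.strong_induction_on with
  | _ m ih =>
    intro hmN hm1 l hl
    obtain ⟨l, rfl⟩ : ∃ l', l = l' + 1 := ⟨l - 1, by omega⟩
    rw [Function.iterate_succ_apply]
    by_cases h0 : ω m = 0
    · rw [h0, iter_zero h.1]; omega
    · have hm2 : 2 ≤ m := by
        rcases Nat.lt_or_ge m 2 with hm | hm
        · have : m = 1 := by omega
          subst this; exact absurd h.2.1 h0
        · exact hm
      have hlt : ω m < m := (h.2.2 m hm2 hmN).2
      rcases Nat.eq_zero_or_pos l with rfl | hl'
      · exact hlt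
      · exact lt_trans (ih (ω m) hlt (by omega) (by omega) l hl') hlt

lemma Nice.anc_lt (h : Nice N ω) {m i : ℕ} (hm : m ≤ N) (hi : 1 ≤ i)
    (ha : isAncestor ω i m) : i < m := by
  obtain ⟨l, hl, hli⟩ := ha
  rcases Nat.eq_zero_or_pos m with rfl | hm1
  · rw [iter_zero h.1] at hli; omega
  · rw [← hli]; exact h.iter_lt m hm hm1 l hl

lemma Nice.ancFinite (h : Nice N ω) {m : ℕ} (hm : m ≤ N) :
    {i | 1 ≤ i ∧ isAncestor ω i m}.Finite := by
  apply Set.Finite.subset (Set.finite_Ico 1 m)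
  rintro i ⟨hi, ha⟩
  exact ⟨hi, h.anc_lt hm hi ha⟩

lemma Nice.depth_zero' (h : Nice N ω) : depth ω 0 = 0 := by
  unfold depth
  convert Set.ncard_empty ℕ
  ext i
  simp only [Set.mem_setOf_eq, Set.mem_empty_iff_false, iff_false, not_and]
  rintro hi ⟨l, hl, hli⟩
  rw [iter_zero h.1] at hli; omega

lemma Nice.depth_one (h : Nice N ω) : depth ω 1 = 0 := by
  unfold depth
  convert Set.ncard_empty ℕ
  ext i
  simp only [Set.mem_setOf_eq, Set.mem_empty_iff_false, iff_false, not_and]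
  rintro hi ⟨l, hl, hli⟩
  obtain ⟨l, rfl⟩ : ∃ l', l = l' + 1 := ⟨l - 1, by omega⟩
  rw [Function.iterate_succ_apply, h.2.1, iter_zero h.1] at hli
  omega

lemma Nice.depth_succ (h : Nice N ω) {m : ℕ} (h2 : 2 ≤ m) (hm : m ≤ N) :
    depth ω m = depth ω (ω m) + 1 := by
  have hω1 : 1 ≤ ω m := (h.2.2 m h2 hm).1
  have hωm : ω m < m := (h.2.2 m h2 hm).2
  have hins : {i | 1 ≤ i ∧ isAncestor ω i m}
      = insert (ω m) {i | 1 ≤ i ∧ isAncestor ω i (ω m)} := by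
    ext i
    simp only [Set.mem_setOf_eq, Set.mem_insert_iff]
    constructor
    · rintro ⟨hi, l, hl, hli⟩
      rcases Nat.lt_or_ge l 2 with hl2 | hl2
      · left; interval_cases l; exact hli.symm
      · right
        refine ⟨hi, l - 1, by omega, ?_⟩
        have : ω^[(l-1)+1] m = i := by rw [show l - 1 + 1 = l by omega]; exact hli
        rwa [Function.iterate_succ_apply] at this
    · rintro (rfl | ⟨hi, l, hl, hli⟩)
      · exact ⟨hω1, 1, one_pos, rfl⟩
      · exact ⟨hi, l + 1, by omega, by rwa [Function.iterate_succ_apply]⟩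
  unfold depth
  rw [hins, Set.ncard_insert_of_notMem _ (h.ancFinite (by omega))]
  rintro ⟨_, ha⟩
  exact absurd (h.anc_lt (by omega) hω1 ha) (lt_irrefl _)

lemma Nice.depth_le (h : Nice N ω) : ∀ m ≤ N, depth ω m ≤ m - 1 := by
  intro m
  induction m using Nat.strong_induction_on with
  | _ m ih =>
    intro hm
    rcases Nat.lt_or_ge m 2 with hm2 | hm2
    · interval_cases m
      · simp [h.depth_zero']
      · simp [h.depth_one]
    · rw [h.depth_succ hm2 hm]
      have h1 := (h.2.2 m hm2 hm).1
      have h2 := (h.2.2 m hm2 hm).2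
      have := ih (ω m) h2 (by omega)
      omega

variable {k n : ℕ} {ω' : ℕ → ℕ}

lemma depth_coupling (hk : 1 ≤ k) (hω : Nice n ω) (hω' : Nice (n - k + 1) ω')
    (hrel : ∀ j, 2 ≤ j → j ≤ n - k + 1 →
      ω' j = if ω (j + k - 1) ≤ k then 1 else ω (j + k - 1) - k + 1) :
    ∀ m, k + 1 ≤ m → m ≤ n → depth ω' (m - k + 1) ≤ depth ω m ∧
      depth ω m ≤ depth ω' (m - k + 1) + (k - 1) := by
  intro m
  induction m using Nat.strong_induction_on with
  | _ m ih =>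
    intro hm1 hm2
    have hm'2 : 2 ≤ m - k + 1 := by omega
    have hm'N : m - k + 1 ≤ n - k + 1 := by omega
    have hrw : ω' (m - k + 1) = if ω m ≤ k then 1 else ω m - k + 1 := by
      rw [hrel _ hm'2 hm'N, show m - k + 1 + k - 1 = m by omega]
    have hd : depth ω m = depth ω (ω m) + 1 := hω.depth_succ (by omega) hm2
    have hd' : depth ω' (m - k + 1) = depth ω' (ω' (m - k + 1)) + 1 :=
      hω'.depth_succ hm'2 hm'N
    have hωm1 : 1 ≤ ω m := (hω.2.2 m (by omega) hm2).1
    have hωm2 : ω m < m := (hω.2.2 m (by omega) hm2).2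
    by_cases hc : ω m ≤ k
    · rw [if_pos hc] at hrw
      rw [hd', hrw, hω'.depth_one]
      have := hω.depth_le (ω m) (by omega)
      omega
    · rw [if_neg hc] at hrw
      have := ih (ω m) hωm2 (by omega) (by omega)
      rw [hd, hd', hrw]
      omega

lemma height_coupling_det (hk : 1 ≤ k) (hkn : k ≤ n) (hω : Nice n ω)
    (hω' : Nice (n - k + 1) ω')
    (hrel : ∀ j, 2 ≤ j → j ≤ n - k + 1 →
      ω' j = if ω (j + k - 1) ≤ k then 1 else ω (j + k - 1) - k + 1) :
    height ω' (n - k + 1) ≤ height ω n ∧ height ω n ≤ height ω' (n - k + 1) + (k - 1) := by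
  constructor
  · apply Finset.sup_le
    intro m' hm'
    rw [Finset.mem_Icc] at hm'
    rcases Nat.lt_or_ge m' 2 with h2 | h2
    · have : m' = 1 := by omega
      subst this; rw [hω'.depth_one]; exact Nat.zero_le _
    · have hm : k + 1 ≤ m' + k - 1 ∧ m' + k - 1 ≤ n := by omega
      have := (depth_coupling hk hω hω' hrel (m' + k - 1) hm.1 hm.2).1
      rw [show m' + k - 1 - k + 1 = m' by omega] at this
      exact le_trans this (Finset.le_sup (by rw [Finset.mem_Icc]; omega))
  · apply Finset.sup_le
    intro m hm
    rw [Finset.mem_Icc] at hm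
    by_cases hc : m ≤ k
    · have := hω.depth_le m (by omega)
      omega
    · have := (depth_coupling hk hω hω' hrel m (by omega) hm.2).2
      refine le_trans this ?_
      have : depth ω' (m - k + 1) ≤ height ω' (n - k + 1) :=
        Finset.le_sup (by rw [Finset.mem_Icc]; omega)
      omega



lemma Dpos {w : ℕ → ℝ} (hw : ∀ i, 0 < w i) {j : ℕ} (hj : 2 ≤ j) :
    0 < ∑ i ∈ Icc 1 (j - 1), w i :=
  Finset.sum_pos (fun i _ => hw i) (by rw [Finset.nonempty_Icc]; omega)

lemma wrtStep_nonneg {w : ℕ → ℝ} (hw : ∀ i, 0 < w i) (j i : ℕ) : 0 ≤ wrtStep w j i := by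
  unfold wrtStep
  split
  · split <;> norm_num
  · split
    · rename_i h1 h2
      have h2' : 2 ≤ j := by omega
      exact div_nonneg (hw i).le (Dpos hw h2').le
    · exact le_refl 0

lemma row_sum {w : ℕ → ℝ} (hw : ∀ i, 0 < w i) {n j : ℕ} (hj : j ≤ n) :
    ∑ i : Fin (n + 1), wrtStep w j i.val = 1 := by
  rw [Fin.sum_univ_eq_sum_range (fun x => wrtStep w j x) (n + 1)]
  by_cases h1 : j ≤ 1
  · simp only [wrtStep, if_pos h1]
    rw [Finset.sum_ite_eq' (Finset.range (n + 1)) 0 (fun _ => (1 : ℝ))]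
    simp
  · simp only [wrtStep, if_neg h1]
    rw [← Finset.sum_filter]
    have hset : (Finset.range (n + 1)).filter (fun x => 1 ≤ x ∧ x < j) = Icc 1 (j - 1) := by
      ext x
      simp only [Finset.mem_filter, Finset.mem_range, Finset.mem_Icc]
      omega
    rw [hset, ← Finset.sum_div, div_self (ne_of_gt (Dpos hw (by omega)))]

lemma Dcalc {w : ℕ → ℝ} {k : ℕ} (hconst : ∀ i, k < i → w i = 1) {j : ℕ} (hj : k + 1 ≤ j) :
    ∑ i ∈ Icc 1 (j - 1), w i = (∑ i ∈ Icc 1 k, w i) + ((j - 1 - k : ℕ) : ℝ) := by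
  have e1 : Icc 1 (j - 1) = Ioc 0 (j - 1) := by
    ext x; simp only [Finset.mem_Icc, Finset.mem_Ioc]; omega
  have e2 : Icc 1 k = Ioc 0 k := by
    ext x; simp only [Finset.mem_Icc, Finset.mem_Ioc]; omega
  rw [e1, e2, ← Finset.sum_Ioc_consecutive w (Nat.zero_le k) (by omega : k ≤ j - 1)]
  congr 1
  rw [Finset.sum_congr rfl (fun i hi => hconst i (Finset.mem_Ioc.mp hi).1), Finset.sum_const,
    Nat.card_Ioc, nsmul_eq_mul, mul_one]

lemma D'calc {θ : ℝ} {j : ℕ} (hj : 2 ≤ j) :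
    ∑ i ∈ Icc 1 (j - 1), (if i = 1 then θ else (1 : ℝ)) = θ + ((j - 2 : ℕ) : ℝ) := by
  have e1 : Icc 1 (j - 1) = Ioc 0 (j - 1) := by
    ext x; simp only [Finset.mem_Icc, Finset.mem_Ioc]; omega
  rw [e1, ← Finset.sum_Ioc_consecutive (fun i => if i = 1 then θ else (1 : ℝ))
    (Nat.zero_le 1) (by omega : 1 ≤ j - 1)]
  have e2 : Ioc 0 1 = ({1} : Finset ℕ) := by
    ext x; simp only [Finset.mem_Ioc, Finset.mem_singleton]; omega
  rw [e2, Finset.sum_singleton, if_pos rfl]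
  have e3 : ∑ i ∈ Ioc 1 (j - 1), (if i = 1 then θ else (1:ℝ)) = ((j - 2 : ℕ) : ℝ) := by
    rw [Finset.sum_congr rfl (fun i hi => if_neg (by have := (Finset.mem_Ioc.mp hi).1; omega)),
      Finset.sum_const, Nat.card_Ioc, nsmul_eq_mul, mul_one]
    congr 1
  rw [e3]

/-- Column sum: summing the WRT step over a fiber of `ψ` gives a Hoppe step. -/
lemma col_sum {w : ℕ → ℝ} {k n : ℕ} (hw : ∀ i, 0 < w i) (hk : 1 ≤ k) (hkn : k ≤ n)
    (hconst : ∀ i, k < i → w i = 1) {j v : ℕ} (hj1 : k + 1 ≤ j) (hj2 : j ≤ n)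
    (hv : v ≤ n - k + 1) :
    ∑ x ∈ (Finset.range (n + 1)).filter (fun x => ψ k x = v), wrtStep w j x
      = wrtStep (fun i => if i = 1 then ∑ i ∈ Icc 1 k, w i else 1) (j - k + 1) v := by
  have hj' : 2 ≤ j - k + 1 := by omega
  have hcast : ((j - k + 1 - 2 : ℕ) : ℝ) = ((j - 1 - k : ℕ) : ℝ) := by
    congr 1; omega
  set θ := ∑ i ∈ Icc 1 k, w i with hθ
  rcases Nat.lt_or_ge v 2 with hv2 | hv2
  · interval_cases v
    · -- v = 0 : empty fiber
      have he : (Finset.range (n + 1)).filter (fun x => ψ k x = 0) = ∅ := by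
        ext x
        simp only [Finset.mem_filter, Finset.mem_range, Finset.notMem_empty, iff_false, not_and]
        intro _; unfold ψ; split <;> omega
      have hR : wrtStep (fun i => if i = 1 then θ else (1:ℝ)) (j - k + 1) 0 = 0 := by
        simp only [wrtStep]
        rw [if_neg (by omega), if_neg (by omega)]
      rw [he, Finset.sum_empty, hR]
    · -- v = 1
      have he : (Finset.range (n + 1)).filter (fun x => ψ k x = 1) = Finset.range (k + 1) := by
        ext x
        simp only [Finset.mem_filter, Finset.mem_range]
        unfold ψ
        constructor
        · rintro ⟨hx, hψx⟩; split at hψx <;> omega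
        · intro hx; refine ⟨by omega, ?_⟩; rw [if_pos (by omega)]
      have hR : wrtStep (fun i => if i = 1 then θ else (1:ℝ)) (j - k + 1) 1
          = θ / (θ + ((j - 1 - k : ℕ) : ℝ)) := by
        simp only [wrtStep]
        rw [if_neg (by omega), if_pos (by omega : 1 ≤ 1 ∧ 1 < j - k + 1), D'calc hj', hcast]
        norm_num
      rw [he, hR]
      have hstep : ∀ x ∈ Finset.range (k + 1), wrtStep w j x
          = if 1 ≤ x then w x / (∑ i ∈ Icc 1 (j - 1), w i) else 0 := by
        intro x hx
        rw [Finset.mem_range] at hx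
        unfold wrtStep
        rw [if_neg (by omega)]
        by_cases h1x : 1 ≤ x
        · rw [if_pos ⟨h1x, by omega⟩, if_pos h1x]
        · rw [if_neg (by omega), if_neg h1x]
      rw [Finset.sum_congr rfl hstep, ← Finset.sum_filter]
      have he2 : (Finset.range (k + 1)).filter (fun x => 1 ≤ x) = Icc 1 k := by
        ext x
        simp only [Finset.mem_filter, Finset.mem_range, Finset.mem_Icc]
        omega
      rw [he2, ← Finset.sum_div, ← hθ, Dcalc hconst hj1, ← hθ]
  · -- v ≥ 2 : singleton fiber {v + k - 1}
    have hvk : v + k - 1 ≤ n := by omega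
    have he : (Finset.range (n + 1)).filter (fun x => ψ k x = v) = {v + k - 1} := by
      ext x
      simp only [Finset.mem_filter, Finset.mem_range, Finset.mem_singleton]
      unfold ψ
      constructor
      · rintro ⟨hx, hψx⟩; split at hψx <;> omega
      · rintro rfl
        refine ⟨by omega, ?_⟩
        rw [if_neg (by omega)]
        omega
    have hR : wrtStep (fun i => if i = 1 then θ else (1:ℝ)) (j - k + 1) v
        = if v < j - k + 1 then 1 / (θ + ((j - 1 - k : ℕ) : ℝ)) else 0 := by
      simp only [wrtStep]
      rw [if_neg (by omega)]
      by_cases hc : v < j - k + 1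
      · rw [if_pos ⟨by omega, hc⟩, if_pos hc, if_neg (by omega : ¬ v = 1), D'calc hj', hcast]
      · rw [if_neg (by omega), if_neg hc]
    have hL : wrtStep w j (v + k - 1)
        = if v < j - k + 1 then 1 / (θ + ((j - 1 - k : ℕ) : ℝ)) else 0 := by
      unfold wrtStep
      rw [if_neg (by omega)]
      by_cases hc : v < j - k + 1
      · rw [if_pos (by omega : 1 ≤ v + k - 1 ∧ v + k - 1 < j), if_pos hc,
          hconst _ (by omega), Dcalc hconst hj1, ← hθ]
      · rw [if_neg (by omega), if_neg hc]
    rw [he, Finset.sum_singleton, hL, hR]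

/-- The collapse map on attachment sequences. -/
def Φ (k n : ℕ) (hk : 1 ≤ k) (hkn : k ≤ n) (t : Fin (n + 1) → Fin (n + 1)) :
    Fin (n - k + 1 + 1) → Fin (n - k + 1 + 1) :=
  fun j' => if h2 : 2 ≤ j'.val then
    ⟨ψ k (t ⟨j'.val + k - 1, by have := j'.isLt; omega⟩).val, by
      have ht := (t ⟨j'.val + k - 1, by have := j'.isLt; omega⟩).isLt
      unfold ψ; split <;> omega⟩
  else ⟨0, by omega⟩

lemma Φ_val_low {k n : ℕ} (hk : 1 ≤ k) (hkn : k ≤ n) (t : Fin (n + 1) → Fin (n + 1))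
    (j' : Fin (n - k + 1 + 1)) (h : j'.val ≤ 1) : (Φ k n hk hkn t j').val = 0 := by
  unfold Φ; rw [dif_neg (by omega)]

lemma Φ_val_high {k n : ℕ} (hk : 1 ≤ k) (hkn : k ≤ n) (t : Fin (n + 1) → Fin (n + 1))
    (j' : Fin (n - k + 1 + 1)) (h : 2 ≤ j'.val) (m : ℕ) (hm : m < n + 1)
    (hmj : m = j'.val + k - 1) :
    (Φ k n hk hkn t j').val = ψ k (t ⟨m, hm⟩).val := by
  subst hmj; unfold Φ; rw [dif_pos h]

/-- Allowed-values finsets for the fiber of `Φ` over `t'`. -/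
def Bf (k n : ℕ) (t' : Fin (n - k + 1 + 1) → Fin (n - k + 1 + 1)) :
    Fin (n + 1) → Finset (Fin (n + 1)) :=
  fun j => if h : k + 1 ≤ j.val then
      Finset.univ.filter
        (fun i => ψ k i.val = (t' ⟨j.val - k + 1, by have := j.isLt; omega⟩).val)
    else Finset.univ

lemma Bf_low {k n : ℕ} (t' : Fin (n - k + 1 + 1) → Fin (n - k + 1 + 1))
    (j : Fin (n + 1)) (h : ¬ k + 1 ≤ j.val) : Bf k n t' j = Finset.univ :=
  dif_neg h

lemma Bf_high {k n : ℕ} (t' : Fin (n - k + 1 + 1) → Fin (n - k + 1 + 1))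
    (j : Fin (n + 1)) (h : k + 1 ≤ j.val) (m : ℕ) (hm : m < n - k + 1 + 1)
    (hmj : m = j.val - k + 1) :
    Bf k n t' j = Finset.univ.filter (fun i => ψ k i.val = (t' ⟨m, hm⟩).val) := by
  subst hmj; unfold Bf; rw [dif_pos h]

/-- Extension of a `Fin`-indexed sequence to `ℕ`. -/
def emb (n : ℕ) (t : Fin (n + 1) → Fin (n + 1)) : ℕ → ℕ :=
  fun j => if h : j < n + 1 then (t ⟨j, h⟩).val else 0


lemma fwd_eq {k n : ℕ} (hk : 1 ≤ k) (hkn : k ≤ n) (t : Fin (n + 1) → Fin (n + 1))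
    (t' : Fin (n - k + 1 + 1) → Fin (n - k + 1 + 1)) (hΦ : Φ k n hk hkn t = t')
    (j : Fin (n + 1)) (hj : k + 1 ≤ j.val) (pf : j.val - k + 1 < n - k + 1 + 1) :
    ψ k (t j).val = (t' ⟨j.val - k + 1, pf⟩).val := by
  have h2 : 2 ≤ (⟨j.val - k + 1, pf⟩ : Fin (n - k + 1 + 1)).val := by
    show 2 ≤ j.val - k + 1
    omega
  have hval := Φ_val_high hk hkn t ⟨j.val - k + 1, pf⟩ h2 j.val j.isLt
    (by show j.val = j.val - k + 1 + k - 1; omega)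
  rw [show (⟨j.val, j.isLt⟩ : Fin (n + 1)) = j from rfl] at hval
  rw [← hval, hΦ]

lemma bwd_eq {k n : ℕ} (hk : 1 ≤ k) (hkn : k ≤ n) (t : Fin (n + 1) → Fin (n + 1))
    (t' : Fin (n - k + 1 + 1) → Fin (n - k + 1 + 1))
    (hB : ∀ j, t j ∈ Bf k n t' j) (j' : Fin (n - k + 1 + 1)) (h2 : 2 ≤ j'.val) :
    (Φ k n hk hkn t j').val = (t' j').val := by
  have hm : j'.val + k - 1 < n + 1 := by have := j'.isLt; omega
  have hmem := hB ⟨j'.val + k - 1, hm⟩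
  rw [Bf_high t' ⟨j'.val + k - 1, hm⟩ (by show k + 1 ≤ j'.val + k - 1; omega)
    j'.val j'.isLt (by show j'.val = j'.val + k - 1 - k + 1; omega),
    Finset.mem_filter] at hmem
  have hval := Φ_val_high hk hkn t j' h2 (j'.val + k - 1) hm rfl
  rw [hval, hmem.2]

lemma fiber_sum {w : ℕ → ℝ} {k n : ℕ} (hw : ∀ i, 0 < w i) (hk : 1 ≤ k) (hkn : k ≤ n)
    (hconst : ∀ i, k < i → w i = 1) (t' : Fin (n - k + 1 + 1) → Fin (n - k + 1 + 1)) :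
    ∑ t ∈ Finset.univ.filter (fun t => Φ k n hk hkn t = t'),
        ∏ j : Fin (n + 1), wrtStep w j.val (t j).val
      = ∏ j' : Fin (n - k + 1 + 1),
          wrtStep (fun i => if i = 1 then ∑ i ∈ Icc 1 k, w i else 1) j'.val (t' j').val := by
  classical
  by_cases hA : (t' ⟨0, by omega⟩).val = 0 ∧ (t' ⟨1, by omega⟩).val = 0
  swap
  · -- degenerate case : empty fiber, zero product
    have hempty : Finset.univ.filter (fun t => Φ k n hk hkn t = t') = ∅ := by
      rw [Finset.filter_eq_empty_iff]
      intro t _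
      intro hΦ
      apply hA
      constructor
      · rw [← hΦ]; exact Φ_val_low hk hkn t _ (by norm_num)
      · rw [← hΦ]; exact Φ_val_low hk hkn t _ (by norm_num)
    rw [hempty, Finset.sum_empty]
    symm
    rcases not_and_or.mp hA with h0 | h1
    · apply Finset.prod_eq_zero (Finset.mem_univ (⟨0, by omega⟩ : Fin (n - k + 1 + 1)))
      unfold wrtStep
      rw [if_pos (by norm_num), if_neg h0]
    · apply Finset.prod_eq_zero (Finset.mem_univ (⟨1, by omega⟩ : Fin (n - k + 1 + 1)))
      unfold wrtStep
      rw [if_pos (by norm_num), if_neg h1]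
  · obtain ⟨h0, h1⟩ := hA
    -- Step 1: the fiber is a product set
    have hfib : Finset.univ.filter (fun t => Φ k n hk hkn t = t')
        = Fintype.piFinset (Bf k n t') := by
      ext t
      simp only [Finset.mem_filter, Finset.mem_univ, true_and, Fintype.mem_piFinset]
      constructor
      · intro hΦ j
        by_cases hj : k + 1 ≤ j.val
        · rw [Bf_high t' j hj (j.val - k + 1) (by have := j.isLt; omega) rfl,
            Finset.mem_filter]
          exact ⟨Finset.mem_univ _, fwd_eq hk hkn t t' hΦ j hj _⟩
        · rw [Bf_low t' j hj]
          exact Finset.mem_univ _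
      · intro hB
        funext j'
        apply Fin.val_injective
        by_cases h2 : 2 ≤ j'.val
        · exact bwd_eq hk hkn t t' hB j' h2
        · rw [Φ_val_low hk hkn t j' (by omega)]
          symm
          rcases Nat.lt_or_ge j'.val 1 with h' | h'
          · have : j' = ⟨0, by omega⟩ :=
              Fin.val_injective (show j'.val = 0 by omega)
            rw [this]; exact h0
          · have : j' = ⟨1, by omega⟩ :=
              Fin.val_injective (show j'.val = 1 by omega)
            rw [this]; exact h1
    rw [hfib, ← Finset.prod_univ_sum (Bf k n t') (fun j i => wrtStep w j.val i.val)]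
    -- Step 2: evaluate the factors
    have hfac : ∀ j : Fin (n + 1), (∑ i ∈ Bf k n t' j, wrtStep w j.val i.val)
        = if j.val ≤ k then (1 : ℝ)
          else wrtStep (fun i => if i = 1 then ∑ i ∈ Icc 1 k, w i else 1) (j.val - k + 1)
            (emb (n - k + 1) t' (j.val - k + 1)) := by
      intro j
      by_cases hj : k + 1 ≤ j.val
      · rw [Bf_high t' j hj (j.val - k + 1) (by have := j.isLt; omega) rfl]
        have hconv : ∑ i ∈ Finset.univ.filter
              (fun i : Fin (n + 1) => ψ k i.val
                = (t' ⟨j.val - k + 1, by have := j.isLt; omega⟩).val),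
              wrtStep w j.val i.val
            = ∑ x ∈ (Finset.range (n + 1)).filter
                (fun x => ψ k x = (t' ⟨j.val - k + 1, by have := j.isLt; omega⟩).val),
              wrtStep w j.val x := by
          rw [Finset.sum_filter, Finset.sum_filter]
          exact Fin.sum_univ_eq_sum_range
            (fun x => if ψ k x = (t' ⟨j.val - k + 1, by have := j.isLt; omega⟩).val
              then wrtStep w j.val x else 0) (n + 1)
        rw [hconv, col_sum hw hk hkn hconst hj (by have := j.isLt; omega)
          (by have := (t' ⟨j.val - k + 1, by have := j.isLt; omega⟩).isLt; omega)]
        rw [if_neg (by omega)]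
        congr 1
        unfold emb
        rw [dif_pos (by have := j.isLt; omega : j.val - k + 1 < n - k + 1 + 1)]
      · rw [Bf_low t' j hj, if_pos (by omega)]
        exact row_sum hw (by have := j.isLt; omega)
    rw [Finset.prod_congr rfl (fun j _ => hfac j)]
    rw [Fin.prod_univ_eq_prod_range (fun x => if x ≤ k then (1 : ℝ)
      else wrtStep (fun i => if i = 1 then ∑ i ∈ Icc 1 k, w i else 1) (x - k + 1)
        (emb (n - k + 1) t' (x - k + 1))) (n + 1)]
    -- Step 3 : rewrite the RHS over `range (n - k + 1 + 1)`
    have hg : ∀ j' : Fin (n - k + 1 + 1),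
        wrtStep (fun i => if i = 1 then ∑ i ∈ Icc 1 k, w i else 1) j'.val (t' j').val
        = wrtStep (fun i => if i = 1 then ∑ i ∈ Icc 1 k, w i else 1) j'.val
            (emb (n - k + 1) t' j'.val) := by
      intro j'
      congr 1
      unfold emb
      rw [dif_pos j'.isLt]
    rw [Finset.prod_congr rfl (fun j' _ => hg j')]
    rw [Fin.prod_univ_eq_prod_range (fun y =>
      wrtStep (fun i => if i = 1 then ∑ i ∈ Icc 1 k, w i else 1) y
        (emb (n - k + 1) t' y)) (n - k + 1 + 1)]
    -- Step 4 : pure `ℕ`-indexed computation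
    set G := fun y => wrtStep (fun i => if i = 1 then ∑ i ∈ Icc 1 k, w i else 1) y
      (emb (n - k + 1) t' y) with hG
    have hτ0 : emb (n - k + 1) t' 0 = 0 := by
      unfold emb; rw [dif_pos (by omega)]; exact h0
    have hτ1 : emb (n - k + 1) t' 1 = 0 := by
      unfold emb; rw [dif_pos (by omega)]; exact h1
    have hsplitL : Finset.range (n + 1) = Finset.range (k + 1) ∪ Finset.Ico (k + 1) (n + 1) := by
      ext x
      simp only [Finset.mem_range, Finset.mem_union, Finset.mem_Ico]
      omega
    have hdisjL : Disjoint (Finset.range (k + 1)) (Finset.Ico (k + 1) (n + 1)) := by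
      rw [Finset.disjoint_left]
      intro x hx hx'
      rw [Finset.mem_range] at hx
      rw [Finset.mem_Ico] at hx'
      omega
    rw [hsplitL, Finset.prod_union hdisjL]
    have hL1 : ∏ x ∈ Finset.range (k + 1), (if x ≤ k then (1 : ℝ)
        else wrtStep (fun i => if i = 1 then ∑ i ∈ Icc 1 k, w i else 1) (x - k + 1)
          (emb (n - k + 1) t' (x - k + 1))) = 1 := by
      apply Finset.prod_eq_one
      intro x hx
      rw [Finset.mem_range] at hx
      rw [if_pos (by omega)]
    rw [hL1, one_mul]
    have hL2 : ∏ x ∈ Finset.Ico (k + 1) (n + 1), (if x ≤ k then (1 : ℝ)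
        else wrtStep (fun i => if i = 1 then ∑ i ∈ Icc 1 k, w i else 1) (x - k + 1)
          (emb (n - k + 1) t' (x - k + 1))) = ∏ y ∈ Finset.Ico 2 (n - k + 1 + 1), G y := by
      have hstep : ∀ x ∈ Finset.Ico (k + 1) (n + 1), (if x ≤ k then (1 : ℝ)
          else wrtStep (fun i => if i = 1 then ∑ i ∈ Icc 1 k, w i else 1) (x - k + 1)
            (emb (n - k + 1) t' (x - k + 1))) = G (x - k + 1) := by
        intro x hx
        rw [Finset.mem_Ico] at hx
        rw [if_neg (by omega)]
      rw [Finset.prod_congr rfl hstep]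
      apply Finset.prod_nbij' (fun x => x - k + 1) (fun y => y + k - 1)
      · intro x hx
        rw [Finset.mem_Ico] at hx ⊢
        omega
      · intro y hy
        rw [Finset.mem_Ico] at hy ⊢
        omega
      · intro x hx
        rw [Finset.mem_Ico] at hx
        omega
      · intro y hy
        rw [Finset.mem_Ico] at hy
        omega
      · intro x hx
        rfl
    rw [hL2]
    have hsplitR : Finset.range (n - k + 1 + 1)
        = Finset.range 2 ∪ Finset.Ico 2 (n - k + 1 + 1) := by
      ext x
      simp only [Finset.mem_range, Finset.mem_union, Finset.mem_Ico]
      omega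
    have hdisjR : Disjoint (Finset.range 2) (Finset.Ico 2 (n - k + 1 + 1)) := by
      rw [Finset.disjoint_left]
      intro x hx hx'
      rw [Finset.mem_range] at hx
      rw [Finset.mem_Ico] at hx'
      omega
    rw [hsplitR, Finset.prod_union hdisjR]
    have hR1 : ∏ y ∈ Finset.range 2, G y = 1 := by
      rw [Finset.prod_range_succ, Finset.prod_range_one]
      have hG0 : G 0 = 1 := by
        rw [hG]
        simp only
        rw [hτ0]
        unfold wrtStep
        rw [if_pos (by omega), if_pos rfl]
      have hG1 : G 1 = 1 := by
        rw [hG]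
        simp only
        rw [hτ1]
        unfold wrtStep
        rw [if_pos (by omega), if_pos rfl]
      rw [hG0, hG1, mul_one]
    rw [hR1, one_mul]


lemma total_sum {w : ℕ → ℝ} (hw : ∀ i, 0 < w i) (n : ℕ) :
    ∑ t : Fin (n + 1) → Fin (n + 1), ∏ j : Fin (n + 1), wrtStep w j.val (t j).val = 1 := by
  classical
  have h := Finset.prod_univ_sum (fun _ : Fin (n + 1) => (Finset.univ : Finset (Fin (n + 1))))
    (fun j i => wrtStep w j.val i.val)
  rw [Fintype.piFinset_univ] at h
  rw [← h]
  exact Finset.prod_eq_one (fun j _ => row_sum hw (Nat.lt_succ_iff.mp j.isLt))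

lemma map_finset_sum {ι α β : Type*} [MeasurableSpace α] [MeasurableSpace β]
    (s : Finset ι) (μ : ι → MeasureTheory.Measure α) {f : α → β} (hf : Measurable f) :
    (∑ i ∈ s, μ i).map f = ∑ i ∈ s, (μ i).map f := by
  classical
  induction s using Finset.cons_induction with
  | empty => simp
  | cons a s ha ih =>
    rw [Finset.sum_cons, MeasureTheory.Measure.map_add _ _ hf, ih, Finset.sum_cons]

lemma step_ne_low {w : ℕ → ℝ} {j i : ℕ} (h : wrtStep w j i ≠ 0) (hj : j ≤ 1) : i = 0 := by
  unfold wrtStep at h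
  rw [if_pos hj] at h
  by_contra hi
  rw [if_neg hi] at h
  exact h rfl

lemma step_ne_high {w : ℕ → ℝ} {j i : ℕ} (h : wrtStep w j i ≠ 0) (hj : ¬ j ≤ 1) :
    1 ≤ i ∧ i < j := by
  unfold wrtStep at h
  rw [if_neg hj] at h
  by_contra hc
  rw [if_neg hc] at h
  exact h rfl

end HC
/-- Root-splitting coupling for the height: there is a coupling of the WRT
(with `w i = 1` for `i > k`) and a Hoppe tree with root weight `θ = w 1 + ⋯ + w k`
such that `H_{n-k+1}^θ ≤ H_n^w ≤ H_{n-k+1}^θ + k - 1` almost surely. -/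

theorem height_coupling (w : ℕ → ℝ) (hw : ∀ i, 0 < w i) (k n : ℕ)
    (hk : 1 ≤ k) (hkn : k ≤ n) (hconst : ∀ i, k < i → w i = 1) :
    ∃ ν : Measure ((ℕ → ℕ) × (ℕ → ℕ)), IsProbabilityMeasure ν ∧
      ν.map Prod.fst = wrtMeasure w n ∧
      ν.map Prod.snd =
        wrtMeasure (fun i => if i = 1 then ∑ j ∈ Finset.Icc 1 k, w j else 1) (n - k + 1) ∧
      ∀ᵐ q ∂ν,
        height q.2 (n - k + 1) ≤ height q.1 n ∧
        height q.1 n ≤ height q.2 (n - k + 1) + (k - 1) := by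
  classical
  have hwM : wrtMeasure w n = ∑ t : Fin (n + 1) → Fin (n + 1),
      (ENNReal.ofReal (∏ j : Fin (n + 1), wrtStep w j.val (t j).val)) •
        Measure.dirac (HC.emb n t) := rfl
  have hwM' : wrtMeasure (fun i => if i = 1 then ∑ j ∈ Finset.Icc 1 k, w j else 1) (n - k + 1)
      = ∑ t' : Fin (n - k + 1 + 1) → Fin (n - k + 1 + 1),
      (ENNReal.ofReal (∏ j : Fin (n - k + 1 + 1),
        wrtStep (fun i => if i = 1 then ∑ j ∈ Finset.Icc 1 k, w j else 1) j.val (t' j).val)) •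
        Measure.dirac (HC.emb (n - k + 1) t') := rfl
  have hnn : ∀ t : Fin (n + 1) → Fin (n + 1),
      0 ≤ ∏ j : Fin (n + 1), wrtStep w j.val (t j).val :=
    fun t => Finset.prod_nonneg (fun j _ => HC.wrtStep_nonneg hw _ _)
  refine ⟨∑ t : Fin (n + 1) → Fin (n + 1),
    (ENNReal.ofReal (∏ j : Fin (n + 1), wrtStep w j.val (t j).val)) •
      Measure.dirac (HC.emb n t, HC.emb (n - k + 1) (HC.Φ k n hk hkn t)), ?_, ?_, ?_, ?_⟩
  · -- probability measure
    constructor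
    simp only [Measure.coe_finset_sum, Finset.sum_apply, Measure.smul_apply, smul_eq_mul,
      measure_univ, mul_one]
    rw [← ENNReal.ofReal_sum_of_nonneg (fun t _ => hnn t), HC.total_sum hw n,
      ENNReal.ofReal_one]
  · -- first marginal
    rw [HC.map_finset_sum _ _ measurable_fst]
    simp only [Measure.map_smul, Measure.map_dirac' measurable_fst]
    rw [hwM]
  · -- second marginal
    rw [HC.map_finset_sum _ _ measurable_snd]
    simp only [Measure.map_smul, Measure.map_dirac' measurable_snd]
    rw [hwM', ← Finset.sum_fiberwise Finset.univ (HC.Φ k n hk hkn)]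
    refine Finset.sum_congr rfl (fun t' _ => ?_)
    have h1 : ∑ t ∈ Finset.univ.filter (fun t => HC.Φ k n hk hkn t = t'),
        (ENNReal.ofReal (∏ j : Fin (n + 1), wrtStep w j.val (t j).val)) •
          Measure.dirac (HC.emb (n - k + 1) (HC.Φ k n hk hkn t))
        = ∑ t ∈ Finset.univ.filter (fun t => HC.Φ k n hk hkn t = t'),
        (ENNReal.ofReal (∏ j : Fin (n + 1), wrtStep w j.val (t j).val)) •
          Measure.dirac (HC.emb (n - k + 1) t') :=
      Finset.sum_congr rfl (fun t ht => by rw [(Finset.mem_filter.mp ht).2])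
    rw [h1, ← Finset.sum_smul]
    congr 1
    rw [← ENNReal.ofReal_sum_of_nonneg (fun t _ => hnn t),
      HC.fiber_sum hw hk hkn hconst t']
  · -- a.e. height comparison
    rw [MeasureTheory.ae_iff]
    simp only [Measure.coe_finset_sum, Finset.sum_apply, Measure.smul_apply, smul_eq_mul]
    apply Finset.sum_eq_zero
    intro t _
    by_cases hz : ENNReal.ofReal (∏ j : Fin (n + 1), wrtStep w j.val (t j).val) = 0
    · rw [hz, zero_mul]
    · have hp : ∀ j : Fin (n + 1), wrtStep w j.val (t j).val ≠ 0 := by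
        intro j hj0
        exact hz (by rw [Finset.prod_eq_zero (Finset.mem_univ j) hj0, ENNReal.ofReal_zero])
      -- the first coordinate is a nice tree
      have hnice : HC.Nice n (HC.emb n t) := by
        refine ⟨?_, ?_, ?_⟩
        · have hv : HC.emb n t 0 = (t ⟨0, by omega⟩).val := dif_pos (by omega)
          rw [hv]
          exact HC.step_ne_low (hp ⟨0, by omega⟩) (by show (0:ℕ) ≤ 1; omega)
        · have hv : HC.emb n t 1 = (t ⟨1, by omega⟩).val := dif_pos (by omega)
          rw [hv]
          exact HC.step_ne_low (hp ⟨1, by omega⟩) (by show (1:ℕ) ≤ 1; omega)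
        · intro j hj2 hjn
          have hjlt : j < n + 1 := by omega
          have hv : HC.emb n t j = (t ⟨j, hjlt⟩).val := dif_pos hjlt
          rw [hv]
          exact HC.step_ne_high (hp ⟨j, hjlt⟩) (by show ¬ j ≤ 1; omega)
      -- the second coordinate relates to the first by collapsing
      have hrel : ∀ j, 2 ≤ j → j ≤ n - k + 1 →
          HC.emb (n - k + 1) (HC.Φ k n hk hkn t) j
            = if HC.emb n t (j + k - 1) ≤ k then 1 else HC.emb n t (j + k - 1) - k + 1 := by
        intro j h2 hn'
        have pf : j < n - k + 1 + 1 := by omega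
        have pf2 : j + k - 1 < n + 1 := by omega
        have hv : HC.emb (n - k + 1) (HC.Φ k n hk hkn t) j
            = (HC.Φ k n hk hkn t ⟨j, pf⟩).val := dif_pos pf
        have hv2 : HC.emb n t (j + k - 1) = (t ⟨j + k - 1, pf2⟩).val := dif_pos pf2
        rw [hv, hv2, HC.Φ_val_high hk hkn t ⟨j, pf⟩ (by show 2 ≤ j; omega)
          (j + k - 1) pf2 rfl]
        rfl
      have hnice' : HC.Nice (n - k + 1) (HC.emb (n - k + 1) (HC.Φ k n hk hkn t)) := by
        refine ⟨?_, ?_, ?_⟩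
        · have hv : HC.emb (n - k + 1) (HC.Φ k n hk hkn t) 0
              = (HC.Φ k n hk hkn t ⟨0, by omega⟩).val := dif_pos (by omega)
          rw [hv]
          exact HC.Φ_val_low hk hkn t _ (by show (0:ℕ) ≤ 1; omega)
        · have hv : HC.emb (n - k + 1) (HC.Φ k n hk hkn t) 1
              = (HC.Φ k n hk hkn t ⟨1, by omega⟩).val := dif_pos (by omega)
          rw [hv]
          exact HC.Φ_val_low hk hkn t _ (by show (1:ℕ) ≤ 1; omega)
        · intro j hj2 hjn
          have hb := hnice.2.2 (j + k - 1) (by omega) (by omega)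
          rw [hrel j hj2 hjn]
          by_cases hc : HC.emb n t (j + k - 1) ≤ k
          · rw [if_pos hc]; omega
          · rw [if_neg hc]; omega
      have hP := HC.height_coupling_det hk hkn hnice hnice' hrel
      have hd0 : Measure.dirac (HC.emb n t, HC.emb (n - k + 1) (HC.Φ k n hk hkn t))
          ({(HC.emb n t, HC.emb (n - k + 1) (HC.Φ k n hk hkn t))}ᶜ
            : Set ((ℕ → ℕ) × (ℕ → ℕ))) = 0 := by
        rw [Measure.dirac_apply' _ ((measurableSet_singleton _).compl)]
        simp
      refine mul_eq_zero_of_right _ (measure_mono_null ?_ hd0)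
      intro q hq
      simp only [Set.mem_compl_iff, Set.mem_singleton_iff]
      rintro rfl
      exact hq ⟨hP.1, hP.2⟩
end
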